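/- Let (A_n) and (B_n) be real-valued random variables on a common probability space and (ℱ_n) sub-σ-algebras such that B_n is ℱ_n-measurable for each n. Let ξ₁ and ξ₂ be real random variables with continuous cumulative distribution functions. Suppose that for every a ∈ ℝ, P(A_n ≤ a | ℱ_n) → P(ξ₁ ≤ a) almost surely as n → ∞, and that B_n converges in distribution to ξ₂. Then for all a, b ∈ ℝ, P(A_n ≤ a, B_n ≤ b) → P(ξ₁ ≤ a) · P(ξ₂ ≤ b); that is, (A_n, B_n) converges in distribution to a pair of independent random variables distributed as ξ₁ and ξ₂ respectively. -/

import Mathlib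

/-!
Since `{B_n ≤ b}` is `ℱ_n`-measurable, `P(A_n ≤ a, B_n ≤ b)` is the integral of the conditional
probability `P(A_n ≤ a | ℱ_n)` over `{B_n ≤ b}`. These conditional probabilities lie in `[0, 1]`
and converge almost surely to the constant `c = P(ξ₁ ≤ a)`, hence converge to `c` in `L¹` by
dominated convergence. Replacing them by `c` thus changes their integral over any set by `o(1)`:
`P(A_n ≤ a, B_n ≤ b) = c · P(B_n ≤ b) + o(1) → c · P(ξ₂ ≤ b)`.
-/

open MeasureTheory ProbabilityTheory Filter Topology

section

variable {Ω E ι : Type*} {m0 : MeasurableSpace Ω} {μ : Measure Ω}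
  [NormedAddCommGroup E] {l : Filter ι}

theorem tendsto_integral_norm_sub_of_tendsto_ae_of_norm_le [IsFiniteMeasure μ]
    [l.IsCountablyGenerated] {g : ι → Ω → E} {f : Ω → E} {C : ℝ}
    (hg : ∀ i, AEStronglyMeasurable (g i) μ) (hf : Integrable f μ)
    (hbound : ∀ i, ∀ᵐ ω ∂μ, ‖g i ω‖ ≤ C)
    (hlim : ∀ᵐ ω ∂μ, Tendsto (fun i => g i ω) l (𝓝 (f ω))) :
    Tendsto (fun i => ∫ ω, ‖g i ω - f ω‖ ∂μ) l (𝓝 0) := by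
  have hbound' : ∀ i, ∀ᵐ ω ∂μ, ‖‖g i ω - f ω‖‖ ≤ C + ‖f ω‖ := fun i =>
    (hbound i).mono fun ω hω => by
      rw [norm_norm]
      linarith [norm_sub_le (g i ω) (f ω)]
  have hlim' : ∀ᵐ ω ∂μ, Tendsto (fun i => ‖g i ω - f ω‖) l (𝓝 0) :=
    hlim.mono fun ω hω => tendsto_iff_norm_sub_tendsto_zero.1 hω
  simpa using tendsto_integral_filter_of_dominated_convergence (fun ω => C + ‖f ω‖)
    (.of_forall fun i => ((hg i).sub hf.aestronglyMeasurable).norm)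
    (.of_forall hbound') ((integrable_const C).add hf.norm) hlim'

theorem tendsto_setIntegral_zero_of_tendsto_integral_norm [NormedSpace ℝ E] {h : ι → Ω → E}
    (s : ι → Set Ω)
    (hint : ∀ i, Integrable (h i) μ) (hlim : Tendsto (fun i => ∫ ω, ‖h i ω‖ ∂μ) l (𝓝 0)) :
    Tendsto (fun i => ∫ ω in s i, h i ω ∂μ) l (𝓝 0) := by
  refine squeeze_zero_norm (fun i => ?_) hlim
  calc ‖∫ ω in s i, h i ω ∂μ‖ ≤ ∫ ω in s i, ‖h i ω‖ ∂μ := norm_integral_le_integral_norm _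
    _ ≤ ∫ ω, ‖h i ω‖ ∂μ :=
      setIntegral_le_integral (hint i).norm (ae_of_all _ fun ω => norm_nonneg _)

theorem measureReal_inter_eq_setIntegral_condExp_indicator [IsFiniteMeasure μ]
    {m : MeasurableSpace Ω} (hm : m ≤ m0) {s t : Set Ω} (ht : MeasurableSet[m0] t)
    (hs : MeasurableSet[m] s) :
    μ.real (t ∩ s) = ∫ ω in s, (μ[t.indicator fun _ => (1 : ℝ) | m]) ω ∂μ := by
  rw [setIntegral_condExp hm ((integrable_const (1 : ℝ)).indicator ht) hs,
    setIntegral_indicator ht, setIntegral_const, smul_eq_mul, mul_one, Set.inter_comm]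

theorem tendsto_measureReal_inter_of_tendsto_condExp_indicator [IsFiniteMeasure μ]
    {m : ι → MeasurableSpace Ω} (hm : ∀ i, m i ≤ m0) [l.IsCountablyGenerated]
    {s t : ι → Set Ω} (ht : ∀ i, MeasurableSet (t i)) (hs : ∀ i, MeasurableSet[m i] (s i))
    {c d : ℝ}
    (hcond : ∀ᵐ ω ∂μ, Tendsto (fun i => (μ[(t i).indicator fun _ => (1 : ℝ) | m i]) ω) l (𝓝 c))
    (hs_lim : Tendsto (fun i => μ.real (s i)) l (𝓝 d)) :
    Tendsto (fun i => μ.real (t i ∩ s i)) l (𝓝 (c * d)) := by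
  set g := fun i => μ[(t i).indicator fun _ => (1 : ℝ) | m i]
  have hbound : ∀ i, ∀ᵐ ω ∂μ, ‖g i ω‖ ≤ 1 := fun i =>
    (ae_bdd_abs_condExp_of_ae_bdd_abs (R := (1 : ℝ)) (f := (t i).indicator fun _ => 1) <|
      ae_of_all _ fun ω => by by_cases hω : ω ∈ t i <;> simp [hω]).mono
      fun ω hω => by rwa [Real.norm_eq_abs]
  have hL1 : Tendsto (fun i => ∫ ω, ‖g i ω - c‖ ∂μ) l (𝓝 0) :=
    tendsto_integral_norm_sub_of_tendsto_ae_of_norm_le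
      (fun i => (stronglyMeasurable_condExp.mono (hm i)).aestronglyMeasurable)
      (integrable_const c) hbound hcond
  have hrem : Tendsto (fun i => ∫ ω in s i, (g i ω - c) ∂μ) l (𝓝 0) :=
    tendsto_setIntegral_zero_of_tendsto_integral_norm s
      (fun i => integrable_condExp.sub (integrable_const c)) hL1
  have hdecomp : ∀ i, μ.real (t i ∩ s i) = ∫ ω in s i, (g i ω - c) ∂μ + c * μ.real (s i) := by
    intro i
    rw [integral_sub integrable_condExp.integrableOn (integrable_const c),
      setIntegral_const, smul_eq_mul, mul_comm,
      ← measureReal_inter_eq_setIntegral_condExp_indicator (hm i) (ht i) (hs i)]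
    ring
  simp_rw [hdecomp]
  simpa using hrem.add (hs_lim.const_mul c)

end

theorem statement17_general {Ω : Type*} [m0 : MeasurableSpace Ω] (P : Measure Ω)
    [IsProbabilityMeasure P]
    (A B : ℕ → Ω → ℝ) (F : ℕ → MeasurableSpace Ω)
    (hF : ∀ n, F n ≤ m0)
    (hA : ∀ n, Measurable (A n))
    (hB : ∀ n, Measurable[F n] (B n))
    (ξ₁ ξ₂ : Ω → ℝ)
    -- for every `a`, `P(A_n ≤ a | ℱ_n) → P(ξ₁ ≤ a)` a.s.:
    (hcond : ∀ a : ℝ, ∀ᵐ ω ∂P,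
      Tendsto (fun n =>
          (P[Set.indicator {ω' | A n ω' ≤ a} (fun _ => (1 : ℝ))|F n]) ω)
        atTop (nhds ((P {ω | ξ₁ ω ≤ a}).toReal)))
    -- `B_n` converges in distribution to `ξ₂`:
    (hBdist : ∀ b : ℝ,
      Tendsto (fun n => (P {ω | B n ω ≤ b}).toReal) atTop
        (nhds ((P {ω | ξ₂ ω ≤ b}).toReal))) :
    ∀ a b : ℝ,
      Tendsto (fun n => (P {ω | A n ω ≤ a ∧ B n ω ≤ b}).toReal) atTop
        (nhds ((P {ω | ξ₁ ω ≤ a}).toReal * (P {ω | ξ₂ ω ≤ b}).toReal)) := by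
  intro a b
  simp_rw [Set.ofPred_and]
  exact tendsto_measureReal_inter_of_tendsto_condExp_indicator hF
    (fun n => measurableSet_le (hA n) measurable_const)
    (fun n => measurableSet_le (hB n) measurable_const) (hcond a) (hBdist b)

/-- Let `A_n`, `B_n` be real random variables and `ℱ_n`
sub-σ-algebras with `B_n` `ℱ_n`-measurable, and let `ξ₁`, `ξ₂` have continuous
CDFs. If for every `a`, `P(A_n ≤ a | ℱ_n) → P(ξ₁ ≤ a)` almost surely, and
`B_n →d ξ₂`, then `P(A_n ≤ a, B_n ≤ b) → P(ξ₁ ≤ a) P(ξ₂ ≤ b)` for all `a, b`;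
that is, `(A_n, B_n)` converges in distribution to an independent pair
distributed as `(ξ₁, ξ₂)`. -/
theorem statement17 {Ω : Type*} [m0 : MeasurableSpace Ω] (P : Measure Ω)
    [IsProbabilityMeasure P]
    (A B : ℕ → Ω → ℝ) (F : ℕ → MeasurableSpace Ω)
    (hF : ∀ n, F n ≤ m0)
    (hA : ∀ n, Measurable (A n))
    (hB : ∀ n, Measurable[F n] (B n))
    (ξ₁ ξ₂ : Ω → ℝ) (hξ₁ : Measurable ξ₁) (hξ₂ : Measurable ξ₂)
    (hcdf₁ : Continuous fun a : ℝ => (P {ω | ξ₁ ω ≤ a}).toReal)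
    (hcdf₂ : Continuous fun b : ℝ => (P {ω | ξ₂ ω ≤ b}).toReal)
    -- for every `a`, `P(A_n ≤ a | ℱ_n) → P(ξ₁ ≤ a)` a.s.:
    (hcond : ∀ a : ℝ, ∀ᵐ ω ∂P,
      Tendsto (fun n =>
          (P[Set.indicator {ω' | A n ω' ≤ a} (fun _ => (1 : ℝ))|F n]) ω)
        atTop (nhds ((P {ω | ξ₁ ω ≤ a}).toReal)))
    -- `B_n` converges in distribution to `ξ₂`:
    (hBdist : ∀ b : ℝ,
      Tendsto (fun n => (P {ω | B n ω ≤ b}).toReal) atTop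
        (nhds ((P {ω | ξ₂ ω ≤ b}).toReal))) :
    ∀ a b : ℝ,
      Tendsto (fun n => (P {ω | A n ω ≤ a ∧ B n ω ≤ b}).toReal) atTop
        (nhds ((P {ω | ξ₁ ω ≤ a}).toReal * (P {ω | ξ₂ ω ≤ b}).toReal)) :=
  statement17_general (m0 := m0) P A B F hF hA hB ξ₁ ξ₂ hcond hBdist
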